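/- arXiv:1001.3387 — 10 statements merged into one kernel-verified Lean document; each statement's English description precedes it below -/
import Mathlib

section
/- Singleton bound for the rank metric: every nonempty code C ⊆ F_q^{n×m} with minimum rank distance d (i.e., rank(X - Y) ≥ d for all distinct X, Y ∈ C) satisfies |C| ≤ q^{max(n,m)·(min(n,m) - d + 1)}. -/
open Matrix

/-- If all rows of `M` with index `< k` vanish, then `rank M ≤ n - k`. -/
lemma rank_le_of_low_rows_zero {F : Type*} [Field F] [Fintype F] {n m k : ℕ}
    (M : Matrix (Fin n) (Fin m) F) (hk : k ≤ n)
    (hz : ∀ i : Fin n, (i : ℕ) < k → ∀ c, M i c = 0) :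
    M.rank ≤ n - k := by
  classical
  set w : Fin n → F := fun i => if k ≤ (i : ℕ) then 1 else 0 with hw
  have hEM : (Matrix.diagonal w) * M = M := by
    ext i c
    rw [Matrix.diagonal_mul]
    by_cases h : k ≤ (i : ℕ)
    · simp [hw, h]
    · simp [hw, h, hz i (lt_of_not_ge h) c]
  have h1 : M.rank ≤ (Matrix.diagonal w).rank := by
    conv_lhs => rw [← hEM]
    exact Matrix.rank_mul_le_left _ _
  have h2 : (Matrix.diagonal w).rank ≤ n - k := by
    rw [Matrix.rank_diagonal]
    have : Fintype.card {i : Fin n // w i ≠ 0} ≤ Fintype.card (Fin (n - k)) := by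
      apply Fintype.card_le_of_injective
        (fun p => ⟨(p.1 : ℕ) - k, by
          have hki : k ≤ (p.1 : ℕ) := by
            by_contra hlt
            exact p.2 (by simp [hw, hlt])
          omega⟩)
      intro a b hab
      have hka : k ≤ (a.1 : ℕ) := by
        by_contra hlt; exact a.2 (by simp [hw, hlt])
      have hkb : k ≤ (b.1 : ℕ) := by
        by_contra hlt; exact b.2 (by simp [hw, hlt])
      have hv : (a.1 : ℕ) - k = (b.1 : ℕ) - k := congrArg Fin.val hab
      apply Subtype.ext; apply Fin.ext; omega
    simpa using this
  exact h1.trans h2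

lemma aux_bound {F : Type*} [Field F] [Fintype F] {n m d : ℕ} (hnm : n ≤ m)
    (C : Finset (Matrix (Fin n) (Fin m) F))
    (hd1 : 1 ≤ d) (hdn : d ≤ n)
    (hdist : ∀ X ∈ C, ∀ Y ∈ C, X ≠ Y → d ≤ (X - Y).rank) :
    C.card ≤ Fintype.card F ^ (m * (n - d + 1)) := by
  classical
  have hle : n - d + 1 ≤ n := by omega
  set f : Matrix (Fin n) (Fin m) F → Matrix (Fin (n - d + 1)) (Fin m) F :=
    fun X => X.submatrix (Fin.castLE hle) id with hf
  have hinj : Set.InjOn f C := by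
    intro X hX Y hY hXY
    by_contra hne
    have hrank : (X - Y).rank ≤ n - (n - d + 1) := by
      apply rank_le_of_low_rows_zero _ hle
      intro i hi c
      have : f X ⟨(i : ℕ), hi⟩ c = f Y ⟨(i : ℕ), hi⟩ c := by rw [hXY]
      simp only [hf, Matrix.submatrix_apply, id] at this
      have hcast : (Fin.castLE hle ⟨(i : ℕ), hi⟩ : Fin n) = i := by
        ext; simp
      rw [hcast] at this
      simp [Matrix.sub_apply, this]
    have := hdist X hX Y hY hne
    omega
  calc C.card ≤ Fintype.card (Matrix (Fin (n - d + 1)) (Fin m) F) := by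
        have := Finset.card_le_card_of_injOn f (fun x _ => Finset.mem_univ (f x)) hinj
        simpa using this
    _ = Fintype.card F ^ (m * (n - d + 1)) := by
        rw [show Fintype.card (Matrix (Fin (n - d + 1)) (Fin m) F)
              = Fintype.card (Fin (n - d + 1) → Fin m → F) from
            Fintype.card_congr (Matrix.of (m := Fin (n - d + 1)) (n := Fin m) (α := F)).symm]
        simp [Fintype.card_fun, ← pow_mul]

/-- Singleton bound for the rank metric: a nonempty code `C` of n×m matrices over
`F_q` whose distinct elements are at rank distance at least `d` (with `1 ≤ d ≤ min n m`)
satisfies `|C| ≤ q ^ (max n m * (min n m - d + 1))`. -/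
theorem rank_metric_singleton_bound {F : Type*} [Field F] [Fintype F] {n m d : ℕ}
    (C : Finset (Matrix (Fin n) (Fin m) F)) (hC : C.Nonempty)
    (hd1 : 1 ≤ d) (hd2 : d ≤ min n m)
    (hdist : ∀ X ∈ C, ∀ Y ∈ C, X ≠ Y → d ≤ (X - Y).rank) :
    C.card ≤ Fintype.card F ^ (max n m * (min n m - d + 1)) := by
  classical
  rcases le_total n m with hnm | hmn
  · rw [max_eq_right hnm, min_eq_left hnm]
    exact aux_bound hnm C hd1 (le_trans hd2 (min_le_left n m)) hdist
  · rw [max_eq_left hmn, min_eq_right hmn]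
    have hd2' : d ≤ m := le_trans hd2 (min_le_right n m)
    set C' := C.image Matrix.transpose with hC'
    have hcard : C'.card = C.card :=
      Finset.card_image_of_injective C Matrix.transpose_injective
    rw [← hcard]
    apply aux_bound hmn C' hd1 hd2'
    intro A hA B hB hAB
    obtain ⟨X, hX, rfl⟩ := Finset.mem_image.mp hA
    obtain ⟨Y, hY, rfl⟩ := Finset.mem_image.mp hB
    have hne : X ≠ Y := fun h => hAB (by rw [h])
    have := hdist X hX Y hY hne
    rwa [← Matrix.transpose_sub, Matrix.rank_transpose]
end

section
/- The Gabidulin generator matrix G with entries G_{i,j} = g_j^{q^i} (0 ≤ i ≤ k−1, 0 ≤ j ≤ n−1), where g_0,…,g_{n−1} ∈ F_{q^m} are linearly independent over F_q and k ≤ n ≤ m, has full row rank k over F_{q^m}. -/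
/-!
A linear relation `∑ cᵢ • rowᵢ = 0` among the rows says that every `g j` is a root of the
`q`-polynomial `P = ∑ cᵢ X^(qⁱ)`. Since `x ↦ x^(qⁱ)` is an iterate of the Frobenius of `L` over
`K`, evaluation of `P` is `K`-linear, so `P` vanishes on the `K`-span of the `g j`, which has
`qⁿ` elements. A nonzero `P` has degree at most `q^(k-1) < qⁿ`, so `P = 0` and all `cᵢ = 0`.
-/

open Polynomial

namespace Polynomial

variable {R : Type*} [CommSemiring R] {q k : ℕ}

noncomputable def linearized (q : ℕ) (c : Fin k → R) : R[X] :=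
  ∑ i, C (c i) * X ^ q ^ (i : ℕ)

theorem eval_linearized (c : Fin k → R) (x : R) :
    (linearized q c).eval x = ∑ i, c i * x ^ q ^ (i : ℕ) := by
  simp [linearized, eval_finsetSum]

theorem coeff_linearized_pow (hq : 1 < q) (c : Fin k → R) (i : Fin k) :
    (linearized q c).coeff (q ^ (i : ℕ)) = c i := by
  rw [linearized, finsetSum_coeff, Finset.sum_eq_single i]
  · simp
  · intro j _ hji
    rw [coeff_C_mul_X_pow, if_neg fun h => hji (Fin.ext (Nat.pow_right_injective hq h).symm)]
  · simp

theorem linearized_ne_zero (hq : 1 < q) {c : Fin k → R} (hc : c ≠ 0) : linearized q c ≠ 0 := by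
  obtain ⟨i, hi⟩ := Function.ne_iff.1 hc
  exact fun h => hi (by rw [← coeff_linearized_pow hq c i, h, coeff_zero, Pi.zero_apply])

theorem natDegree_linearized_le (hq : 0 < q) (c : Fin k → R) :
    (linearized q c).natDegree ≤ q ^ (k - 1) :=
  natDegree_sum_le_of_forall_le _ _ fun i _ =>
    (natDegree_C_mul_X_pow_le _ _).trans (Nat.pow_le_pow_right hq (by omega))

theorem ncard_le_natDegree_of_forall_isRoot {R : Type*} [CommRing R] [IsDomain R] {p : R[X]}
    (hp : p ≠ 0) {s : Set R} (hs : ∀ x ∈ s, p.IsRoot x) : s.ncard ≤ p.natDegree := by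
  refine (Set.ncard_le_ncard (fun x hx => ?_) (p.rootSet_finite R)).trans (ncard_rootSet_le p R)
  rw [mem_rootSet, aeval_def, Algebra.algebraMap_self, ← eval_map, map_id]
  exact ⟨hp, hs x hx⟩

end Polynomial

section

variable {K L : Type*} [Field K] [Fintype K] [CommRing L] [Algebra K L] {n k : ℕ}

variable (K) in
noncomputable def linearizedLinearMap (c : Fin k → L) : L →ₗ[K] L :=
  ∑ i, c i • (FiniteField.frobeniusAlgHom K L).toLinearMap ^ (i : ℕ)

theorem linearizedLinearMap_apply (c : Fin k → L) (x : L) :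
    linearizedLinearMap K c x = (linearized (Fintype.card K) c).eval x := by
  simp [linearizedLinearMap, eval_linearized, Module.End.pow_apply,
    FiniteField.coe_frobeniusAlgHom, pow_iterate]

theorem eval_linearized_eq_zero_of_mem_span {c : Fin k → L} {s : Set L}
    (hs : ∀ x ∈ s, (linearized (Fintype.card K) c).eval x = 0) {x : L}
    (hx : x ∈ Submodule.span K s) : (linearized (Fintype.card K) c).eval x = 0 := by
  rw [← linearizedLinearMap_apply, ← LinearMap.mem_ker]
  exact Submodule.span_le.2 (fun y hy => by simpa [linearizedLinearMap_apply] using hs y hy) hx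

theorem linearIndependent_pow_card_pow_rows [IsDomain L] (hk : k ≤ n) (g : Fin n → L)
    (hg : LinearIndependent K g) :
    LinearIndependent L fun (i : Fin k) (j : Fin n) => g j ^ Fintype.card K ^ (i : ℕ) := by
  set q := Fintype.card K
  set V := Submodule.span K (Set.range g)
  have hq : 1 < q := Fintype.one_lt_card
  refine Fintype.linearIndependent_iff.2 fun c hc => ?_
  by_contra! ⟨i, hi⟩
  have hP : linearized q c ≠ 0 := linearized_ne_zero hq (Function.ne_iff.2 ⟨i, hi⟩)
  have hroots : ∀ x ∈ (V : Set L), (linearized q c).IsRoot x := by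
    refine fun x hx => eval_linearized_eq_zero_of_mem_span ?_ hx
    rintro _ ⟨j, rfl⟩
    simpa [eval_linearized] using congrFun hc j
  have : Module.Finite K V := Module.Finite.span_of_finite K (Set.finite_range g)
  have hcardV : (V : Set L).ncard = q ^ n := by
    rw [← Nat.card_coe_set_eq, SetLike.coe_sort_coe, Module.natCard_eq_pow_finrank (K := K),
      finrank_span_eq_card hg, Nat.card_eq_fintype_card, Fintype.card_fin]
  have hdeg : q ^ n ≤ q ^ (k - 1) :=
    hcardV ▸ (ncard_le_natDegree_of_forall_isRoot hP hroots).trans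
      (natDegree_linearized_le (by omega) c)
  have := (Nat.pow_le_pow_iff_right hq).1 hdeg
  have := i.pos
  omega

end

theorem gabidulin_generator_full_rank_general {K L : Type*} [Field K] [Field L]
    [Fintype K] [Algebra K L] {n k : ℕ}
    (hk : k ≤ n)
    (g : Fin n → L) (hg : LinearIndependent K g) :
    (Matrix.of fun (i : Fin k) (j : Fin n) =>
      g j ^ Fintype.card K ^ (i : ℕ)).rank = k := by
  exact (linearIndependent_pow_card_pow_rows hk g hg).rank_matrix.trans (Fintype.card_fin k)

/-- The Gabidulin generator matrix `G` with entries `G i j = g j ^ (q ^ i)`,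
where `g 0, …, g (n-1) ∈ F_{q^m}` are linearly independent over `F_q` and
`k ≤ n ≤ m`, has full row rank `k`. -/
theorem gabidulin_generator_full_rank {K L : Type*} [Field K] [Field L]
    [Fintype K] [Fintype L] [Algebra K L] {n m k : ℕ}
    (hm : Module.finrank K L = m) (hn : n ≤ m) (hk : k ≤ n)
    (g : Fin n → L) (hg : LinearIndependent K g) :
    (Matrix.of fun (i : Fin k) (j : Fin n) =>
      g j ^ Fintype.card K ^ (i : ℕ)).rank = k :=
  gabidulin_generator_full_rank_general hk g hg
end

section
/- Every nonzero codeword of the Gabidulin code (the row space of the matrix G with G_{i,j} = g_j^{q^i}, g_0,…,g_{n−1} linearly independent over F_q, k ≤ n ≤ m), viewed as a vector in F_{q^m}^n and hence as an n×m matrix over F_q, has rank (over F_q) at least n − k + 1. -/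
open Polynomial

/-- Every nonzero codeword of the Gabidulin code (row space of `G` with
`G i j = g j ^ (q ^ i)`, the `g j` linearly independent over `F_q`, `k ≤ n ≤ m`),
viewed via the `F_q`-span of its coordinates, has rank at least `n - k + 1`. -/
theorem gabidulin_codeword_rank_lower_bound {K L : Type*} [Field K] [Field L]
    [Fintype K] [Fintype L] [Algebra K L] {n m k : ℕ}
    (hm : Module.finrank K L = m) (hn : n ≤ m) (hk : k ≤ n)
    (g : Fin n → L) (hg : LinearIndependent K g)
    (u : Fin k → L) (hu : u ≠ 0) :
    n - k + 1 ≤ Module.finrank K (Submodule.span K (Set.range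
      (Matrix.vecMul u (Matrix.of fun (i : Fin k) (j : Fin n) =>
        g j ^ Fintype.card K ^ (i : ℕ))))) := by
  classical
  set q := Fintype.card K with hq
  have hq2 : 2 ≤ q := Fintype.one_lt_card
  obtain ⟨i0, hi0⟩ : ∃ i, u i ≠ 0 := by
    by_contra h; push_neg at h; exact hu (funext fun i => h i)
  have hk1 : 1 ≤ k := i0.pos
  -- characteristic facts
  set p := ringChar K with hp
  haveI hKp : CharP K p := ringChar.charP K
  haveI hfact : Fact p.Prime := ⟨CharP.char_is_prime K p⟩
  haveI hLp : CharP L p := charP_of_injective_algebraMap (algebraMap K L).injective p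
  obtain ⟨e, hpe, hcard⟩ := FiniteField.card K p
  -- Frobenius powers are additive on L
  have hfrob : ∀ (N : ℕ) (x y : L), (x + y) ^ q ^ N = x ^ q ^ N + y ^ q ^ N := by
    intro N x y
    rw [hq, hcard, ← pow_mul]
    exact add_pow_char_pow x y p (↑e * N)
  -- the linearized-polynomial map
  set φ : L →ₗ[K] L :=
    { toFun := fun x => ∑ i : Fin k, u i * x ^ q ^ (i : ℕ)
      map_add' := by
        intro x y
        simp only [hfrob, mul_add]
        rw [Finset.sum_add_distrib]
      map_smul' := by
        intro a x
        simp only [RingHom.id_apply, Finset.mul_sum, Finset.smul_sum]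
        refine Finset.sum_congr rfl fun i _ => ?_
        rw [_root_.smul_pow, FiniteField.pow_card_pow, mul_smul_comm] } with hφ
  have hcode : Matrix.vecMul u (Matrix.of fun (i : Fin k) (j : Fin n) =>
      g j ^ q ^ (i : ℕ)) = fun j => φ (g j) := by
    funext j
    simp [Matrix.vecMul, dotProduct, hφ]
  rw [hcode]
  -- the span is the image of the span of the g's
  have hspan : Submodule.span K (Set.range fun j => φ (g j)) =
      Submodule.map φ (Submodule.span K (Set.range g)) := by
    rw [Submodule.map_span, ← Set.range_comp]; rfl
  rw [hspan]
  set W := Submodule.span K (Set.range g) with hW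
  have hWrank : Module.finrank K W = n := by
    rw [finrank_span_eq_card hg, Fintype.card_fin]
  -- rank-nullity for φ restricted to W
  have hrn := LinearMap.finrank_range_add_finrank_ker (φ.domRestrict W)
  have hrange : LinearMap.range (φ.domRestrict W) = Submodule.map φ W := by
    ext x
    simp only [LinearMap.mem_range, Submodule.mem_map, LinearMap.domRestrict_apply]
    constructor
    · rintro ⟨⟨y, hy⟩, h⟩; exact ⟨y, hy, h⟩
    · rintro ⟨y, hy, h⟩; exact ⟨⟨y, hy⟩, h⟩
  rw [hrange, hWrank] at hrn
  -- kernel of the restriction injects into ker φ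
  have hkerle : Module.finrank K (LinearMap.ker (φ.domRestrict W)) ≤
      Module.finrank K (LinearMap.ker φ) := by
    have : Module.Finite K L := Module.Finite.of_finite
    refine LinearMap.finrank_le_finrank_of_injective
      (f := LinearMap.codRestrict (LinearMap.ker φ)
        (W.subtype.comp (LinearMap.ker (φ.domRestrict W)).subtype) ?_) ?_
    · rintro ⟨⟨x, hxW⟩, hx⟩
      simpa [LinearMap.mem_ker, LinearMap.domRestrict_apply] using hx
    · intro a b hab
      rw [Subtype.ext_iff] at hab
      simp only [LinearMap.codRestrict_apply, LinearMap.coe_comp, Function.comp_apply,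
        Submodule.coe_subtype] at hab
      exact Subtype.ext (Subtype.ext hab)
  -- kernel of φ consists of roots of a nonzero polynomial of degree ≤ q^(k-1)
  set P : L[X] := ∑ i : Fin k, C (u i) * X ^ (q ^ (i : ℕ)) with hP
  have hPne : P ≠ 0 := by
    intro h
    have hc : P.coeff (q ^ (i0 : ℕ)) = u i0 := by
      rw [hP, finset_sum_coeff]
      rw [Finset.sum_eq_single i0]
      · simp
      · intro b _ hb
        have : q ^ (b : ℕ) ≠ q ^ (i0 : ℕ) := fun hbe =>
          hb (Fin.ext (Nat.pow_right_injective hq2 hbe))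
        simp only [coeff_C_mul, coeff_X_pow, Ne.symm this, if_false, mul_zero]
      · simp
    rw [h] at hc
    exact hi0 (by simpa using hc.symm)
  have hPdeg : P.natDegree ≤ q ^ (k - 1) := by
    refine (natDegree_sum_le _ _).trans ?_
    rw [Finset.fold_max_le]
    refine ⟨Nat.zero_le _, fun i _ => ?_⟩
    refine (natDegree_C_mul_le _ _).trans ?_
    refine (natDegree_X_pow_le _).trans ?_
    exact Nat.pow_le_pow_right (by omega) (by omega)
  have hkerP : ∀ x ∈ LinearMap.ker φ, x ∈ P.roots := by
    intro x hx
    rw [mem_roots hPne, IsRoot.def]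
    rw [LinearMap.mem_ker] at hx
    have : P.eval x = φ x := by
      rw [hP]; simp [hφ, eval_finset_sum]
    rw [this, hx]
  set Z : Finset L := Set.toFinset (LinearMap.ker φ : Set L) with hZ
  have hZcard : Z.card ≤ P.natDegree := by
    apply card_le_degree_of_subset_roots
    intro x hx
    rw [hZ] at hx
    simp only [Finset.mem_val, Set.mem_toFinset, SetLike.mem_coe] at hx
    exact hkerP x hx
  have hZeq : Z.card = q ^ Module.finrank K (LinearMap.ker φ) := by
    rw [hZ, Set.toFinset_card]
    rw [← Module.card_eq_pow_finrank (K := K) (V := LinearMap.ker φ)]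
    exact Fintype.card_congr (Equiv.refl _)
  have hkerφ : Module.finrank K (LinearMap.ker φ) ≤ k - 1 := by
    by_contra h
    push_neg at h
    have : q ^ k ≤ q ^ Module.finrank K (LinearMap.ker φ) :=
      Nat.pow_le_pow_right (by omega) (by omega)
    have h2 : q ^ k ≤ q ^ (k - 1) := by
      calc q ^ k ≤ Z.card := by rw [hZeq]; exact this
        _ ≤ P.natDegree := hZcard
        _ ≤ q ^ (k - 1) := hPdeg
    have := Nat.pow_lt_pow_right (show 1 < q by omega) (show k - 1 < k by omega)
    omega
  omega
end

section
/- The minimum rank distance of the [n,k] Gabidulin code equals n − k + 1 when m ≥ n; i.e., the Gabidulin code is maximum rank distance (MRD), attaining the rank-metric Singleton bound |C| = q^{m(n−d+1)} with d = n−k+1. -/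
/-! The codeword of a message `u` is `(L_u (g j))_j`, where `L_u x = ∑ u_i x ^ q ^ i` is a
`K`-linear map of `L`. Its rank is thus `dim L_u(W)` for `W = span g`, which equals
`n - dim (W ⊓ ker L_u)`. A nonzero `L_u` is evaluation of a polynomial of degree at most
`q ^ (k - 1)`, so `ker L_u` has at most `q ^ (k - 1)` elements and dimension at most `k - 1`:
every nonzero codeword has rank at least `n - k + 1`, which also makes the encoding injective.
The bound is attained by a nonzero `u` with `L_u (g j) = 0` for `j < k - 1`, a system of `k - 1`
linear equations in `k` unknowns. -/

open Polynomial Module Matrix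

noncomputable def linearizedMap (K : Type*) {L : Type*} [Field K] [Fintype K] [CommRing L]
    [Algebra K L] {k : ℕ} (u : Fin k → L) : L →ₗ[K] L :=
  ∑ i, u i • (FiniteField.frobeniusAlgHom K L ^ (i : ℕ)).toLinearMap

theorem linearizedMap_apply (K : Type*) {L : Type*} [Field K] [Fintype K] [CommRing L]
    [Algebra K L] {k : ℕ} (u : Fin k → L) (x : L) :
    linearizedMap K u x = ∑ i, u i * x ^ Fintype.card K ^ (i : ℕ) := by
  simp [linearizedMap, FiniteField.coe_frobeniusAlgHom, pow_iterate]

section LinearizedPoly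

variable {R : Type*} [CommRing R] (q : ℕ) {k : ℕ}

noncomputable def linearizedPoly (u : Fin k → R) : R[X] :=
  ∑ i, C (u i) * X ^ q ^ (i : ℕ)

theorem eval_linearizedPoly (K : Type*) [Field K] [Fintype K] [Algebra K R] (u : Fin k → R)
    (x : R) : (linearizedPoly (Fintype.card K) u).eval x = linearizedMap K u x := by
  simp [linearizedPoly, linearizedMap_apply, eval_finsetSum]

variable {q}

theorem coeff_linearizedPoly (hq : 1 < q) (u : Fin k → R) (j : Fin k) :
    (linearizedPoly q u).coeff (q ^ (j : ℕ)) = u j := by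
  have hinj : Function.Injective fun i : Fin k => q ^ (i : ℕ) :=
    fun a b h => Fin.ext (Nat.pow_right_injective hq h)
  simp [linearizedPoly, coeff_X_pow, hinj.eq_iff]

theorem linearizedPoly_ne_zero (hq : 1 < q) {u : Fin k → R} (hu : u ≠ 0) :
    linearizedPoly q u ≠ 0 := by
  obtain ⟨j, hj⟩ := Function.ne_iff.mp hu
  exact fun h => hj (by simpa [h] using (coeff_linearizedPoly hq u j).symm)

theorem natDegree_linearizedPoly_le (hq : 0 < q) (u : Fin k → R) :
    (linearizedPoly q u).natDegree ≤ q ^ (k - 1) :=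
  natDegree_sum_le_of_forall_le _ _ fun i _ => (natDegree_C_mul_X_pow_le _ _).trans
    (Nat.pow_le_pow_right hq (by omega))

end LinearizedPoly

theorem finrank_le_of_forall_eval_eq_zero {K L : Type*} [Field K] [Fintype K] [Field L]
    [Fintype L] [Algebra K L] {P : L[X]} (hP : P ≠ 0) {d : ℕ}
    (hd : P.natDegree ≤ Fintype.card K ^ d) {V : Submodule K L} (hV : ∀ x ∈ V, P.eval x = 0) :
    finrank K V ≤ d := by
  classical
  have hcard : Fintype.card V ≤ Fintype.card K ^ d := by
    refine (Set.toFinset_card (V : Set L)).symm.trans_le ?_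
    refine (card_le_degree_of_subset_roots fun x hx => ?_).trans hd
    simp only [Set.mem_toFinset, Finset.mem_val, SetLike.mem_coe] at hx
    exact (mem_roots hP).2 (hV x hx)
  rw [card_eq_pow_finrank (K := K)] at hcard
  exact (Nat.pow_le_pow_iff_right Fintype.one_lt_card).mp hcard

theorem finrank_ker_linearizedMap_le {K L : Type*} [Field K] [Fintype K] [Field L] [Fintype L]
    [Algebra K L] {k : ℕ} {u : Fin k → L} (hu : u ≠ 0) :
    finrank K (LinearMap.ker (linearizedMap K u)) ≤ k - 1 :=
  finrank_le_of_forall_eval_eq_zero (linearizedPoly_ne_zero Fintype.one_lt_card hu)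
    (natDegree_linearizedPoly_le Fintype.card_pos u) fun x hx => by
      rwa [eval_linearizedPoly]

theorem Submodule.finrank_map_add_finrank_inf_ker {K V V₂ : Type*} [DivisionRing K]
    [AddCommGroup V] [Module K V] [AddCommGroup V₂] [Module K V₂] [FiniteDimensional K V]
    (f : V →ₗ[K] V₂) (W : Submodule K V) :
    finrank K (W.map f) + finrank K (W ⊓ LinearMap.ker f : Submodule K V) = finrank K W := by
  have h := (f.domRestrict W).finrank_range_add_finrank_ker
  rwa [LinearMap.range_domRestrict, LinearMap.ker_domRestrict, ← Submodule.finrank_map_subtype_eq,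
    Submodule.map_comap_subtype] at h

theorem Matrix.exists_ne_zero_vecMul_eq_zero {K m n : Type*} [Field K] [Fintype m] [Fintype n]
    (A : Matrix m n K) (h : Fintype.card n < Fintype.card m) : ∃ v ≠ 0, v ᵥ* A = 0 := by
  have hker : LinearMap.ker A.vecMulLinear ≠ ⊥ :=
    LinearMap.ker_ne_bot_of_finrank_lt (by simpa using h)
  obtain ⟨v, hv, hv0⟩ := Submodule.exists_mem_ne_zero_of_ne_bot hker
  exact ⟨v, hv0, hv⟩

def mooreMatrix (K : Type*) [Fintype K] {L ι : Type*} [CommRing L] (k : ℕ) (g : ι → L) :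
    Matrix (Fin k) ι L :=
  Matrix.of fun i j => g j ^ Fintype.card K ^ (i : ℕ)

section Moore

variable {K L ι : Type*} [Field K] [Fintype K] [Field L] [Algebra K L] {k : ℕ} {g : ι → L}

theorem vecMul_mooreMatrix [Fintype ι] (u : Fin k → L) :
    u ᵥ* mooreMatrix K k g = linearizedMap K u ∘ g := by
  ext j
  simp [vecMul, dotProduct, mooreMatrix, linearizedMap_apply]

theorem span_range_vecMul_mooreMatrix [Fintype ι] (u : Fin k → L) :
    Submodule.span K (Set.range (u ᵥ* mooreMatrix K k g)) =
      (Submodule.span K (Set.range g)).map (linearizedMap K u) := by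
  rw [vecMul_mooreMatrix, Set.range_comp, Submodule.map_span]

variable [Fintype L] [Fintype ι]

theorem finrank_span_vecMul_mooreMatrix_add_finrank_inf_ker (hg : LinearIndependent K g)
    (u : Fin k → L) :
    finrank K (Submodule.span K (Set.range (u ᵥ* mooreMatrix K k g))) +
      finrank K (Submodule.span K (Set.range g) ⊓ LinearMap.ker (linearizedMap K u) :
        Submodule K L) = Fintype.card ι := by
  rw [span_range_vecMul_mooreMatrix, Submodule.finrank_map_add_finrank_inf_ker,
    finrank_span_eq_card hg]

theorem card_add_one_le_finrank_span_vecMul_mooreMatrix (hg : LinearIndependent K g)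
    {u : Fin k → L} (hu : u ≠ 0) :
    Fintype.card ι + 1 ≤
      finrank K (Submodule.span K (Set.range (u ᵥ* mooreMatrix K k g))) + k := by
  have hk : k ≠ 0 := by
    rintro rfl
    exact hu (Subsingleton.elim _ _)
  have hker : finrank K (Submodule.span K (Set.range g) ⊓ LinearMap.ker (linearizedMap K u) :
      Submodule K L) ≤ k - 1 :=
    (Submodule.finrank_mono inf_le_right).trans (finrank_ker_linearizedMap_le hu)
  have := finrank_span_vecMul_mooreMatrix_add_finrank_inf_ker hg u
  omega

theorem vecMul_mooreMatrix_injective (hg : LinearIndependent K g) (hk : k ≤ Fintype.card ι) :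
    Function.Injective fun u : Fin k → L => u ᵥ* mooreMatrix K k g := by
  refine (injective_iff_map_eq_zero (vecMulLinear (mooreMatrix K k g))).2 fun u hu0 => ?_
  by_contra hu
  have := card_add_one_le_finrank_span_vecMul_mooreMatrix hg hu
  simp only [vecMulLinear_apply] at hu0
  rw [hu0, Submodule.span_eq_bot.2 (by rintro _ ⟨_, rfl⟩; rfl), finrank_bot] at this
  omega

end Moore

theorem exists_finrank_span_vecMul_mooreMatrix_eq {K L : Type*} [Field K] [Fintype K] [Field L]
    [Fintype L] [Algebra K L] {n k : ℕ} {g : Fin n → L} (hg : LinearIndependent K g)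
    (hk0 : 0 < k) (hk : k ≤ n) :
    ∃ u ≠ 0,
      finrank K (Submodule.span K (Set.range (u ᵥ* mooreMatrix K k g))) = n - k + 1 := by
  have hkn : k - 1 ≤ n := by omega
  obtain ⟨u, hu, hvanish⟩ :=
    (mooreMatrix K k (g ∘ Fin.castLE hkn)).exists_ne_zero_vecMul_eq_zero
      (by simp only [Fintype.card_fin]; omega)
  rw [vecMul_mooreMatrix] at hvanish
  have hle : Submodule.span K (Set.range (g ∘ Fin.castLE hkn)) ≤
      Submodule.span K (Set.range g) ⊓ LinearMap.ker (linearizedMap K u) := by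
    rw [Submodule.span_le]
    rintro _ ⟨j, rfl⟩
    exact ⟨Submodule.subset_span ⟨_, rfl⟩, congrFun hvanish j⟩
  have hker := Submodule.finrank_mono hle
  rw [finrank_span_eq_card (hg.comp _ (Fin.castLE_injective hkn)), Fintype.card_fin] at hker
  have hsum := finrank_span_vecMul_mooreMatrix_add_finrank_inf_ker hg u
  have hlower := card_add_one_le_finrank_span_vecMul_mooreMatrix hg hu
  rw [Fintype.card_fin] at hsum hlower
  exact ⟨u, hu, by omega⟩

theorem gabidulin_is_MRD_general {K L : Type*} [Field K] [Field L]
    [Fintype K] [Fintype L] [Algebra K L] {n m k : ℕ}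
    (hm : Module.finrank K L = m) (hk0 : 0 < k) (hk : k ≤ n)
    (g : Fin n → L) (hg : LinearIndependent K g)
    (G : Matrix (Fin k) (Fin n) L)
    (hG : ∀ (i : Fin k) (j : Fin n), G i j = g j ^ Fintype.card K ^ (i : ℕ)) :
    IsLeast {r : ℕ | ∃ u : Fin k → L, u ≠ 0 ∧
        r = Module.finrank K (Submodule.span K (Set.range (Matrix.vecMul u G)))}
      (n - k + 1) ∧
    Set.ncard {c : Fin n → L | ∃ u : Fin k → L, c = Matrix.vecMul u G}
      = Fintype.card K ^ (m * k) := by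
  obtain rfl : G = mooreMatrix K k g := Matrix.ext hG
  refine ⟨⟨?_, ?_⟩, ?_⟩
  · obtain ⟨u, hu, hrank⟩ := exists_finrank_span_vecMul_mooreMatrix_eq hg hk0 hk
    exact ⟨u, hu, hrank.symm⟩
  · rintro r ⟨u, hu, rfl⟩
    have := card_add_one_le_finrank_span_vecMul_mooreMatrix hg hu
    rw [Fintype.card_fin] at this
    omega
  · have hcode : {c : Fin n → L | ∃ u : Fin k → L, c = u ᵥ* mooreMatrix K k g} =
        Set.range (· ᵥ* mooreMatrix K k g) := by
      ext c
      exact exists_congr fun u => eq_comm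
    have hinj := vecMul_mooreMatrix_injective (K := K) (k := k) hg (by simpa using hk)
    rw [hcode, Set.ncard_range_of_injective hinj, Nat.card_fun, Nat.card_eq_fintype_card,
      card_eq_pow_finrank (K := K), hm, Nat.card_fin, ← pow_mul]

/-- The minimum rank distance of the `[n, k]` Gabidulin code equals `n - k + 1`
when `m ≥ n` (the minimum, over nonzero messages `u`, of the rank of the codeword
`u ᵥ* G` is exactly `n - k + 1`), and the code attains the rank-metric Singleton
bound: it has exactly `q ^ (m * (n - d + 1)) = q ^ (m * k)` codewords. -/
theorem gabidulin_is_MRD {K L : Type*} [Field K] [Field L]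
    [Fintype K] [Fintype L] [Algebra K L] {n m k : ℕ}
    (hm : Module.finrank K L = m) (hn : n ≤ m) (hk0 : 0 < k) (hk : k ≤ n)
    (g : Fin n → L) (hg : LinearIndependent K g)
    (G : Matrix (Fin k) (Fin n) L)
    (hG : ∀ (i : Fin k) (j : Fin n), G i j = g j ^ Fintype.card K ^ (i : ℕ)) :
    IsLeast {r : ℕ | ∃ u : Fin k → L, u ≠ 0 ∧
        r = Module.finrank K (Submodule.span K (Set.range (Matrix.vecMul u G)))}
      (n - k + 1) ∧
    Set.ncard {c : Fin n → L | ∃ u : Fin k → L, c = Matrix.vecMul u G}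
      = Fintype.card K ^ (m * k) :=
  gabidulin_is_MRD_general hm hk0 hk g hg G hG
end

section
/- Let C ⊆ F_q^{n×m} be a code with minimum rank distance at least 2t+1. Then for every full-rank A ∈ F_q^{N×n} (rank A = n) and every pair (X, X') of distinct codewords in C, and every D, D' ∈ F_q^{N×t}, Z, Z' ∈ F_q^{t×m}, we have AX + DZ ≠ AX' + D'Z'; i.e., the codeword is uniquely determined from the received matrix under any t injected error packets. -/
lemma rank_mul_eq_of_full_rank {F : Type*} [Field F] {n m N : ℕ}
    (A : Matrix (Fin N) (Fin n) F) (hA : A.rank = n)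
    (M : Matrix (Fin n) (Fin m) F) : (A * M).rank = M.rank := by
  have hinj : Function.Injective A.mulVecLin := by
    rw [← LinearMap.ker_eq_bot, ← Submodule.finrank_eq_zero]
    have h := A.mulVecLin.finrank_range_add_finrank_ker
    rw [Matrix.rank] at hA
    rw [hA, Module.finrank_fin_fun] at h
    omega
  rw [Matrix.rank, Matrix.rank, Matrix.mulVecLin_mul, LinearMap.range_comp]
  exact LinearEquiv.finrank_eq
    (Submodule.equivMapOfInjective _ hinj _).symm

/-- If `C` has minimum rank distance at least `2t + 1`, then for every full-rank
transfer matrix `A`, distinct codewords `X ≠ X'`, and any error matrices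
`D, D', Z, Z'` (at most `t` injected error packets), `AX + DZ ≠ AX' + D'Z'`:
the codeword is uniquely determined from the received matrix. -/
theorem universally_t_error_correcting {F : Type*} [Field F] [Fintype F]
    {n m N t : ℕ} (C : Set (Matrix (Fin n) (Fin m) F))
    (hdist : ∀ X ∈ C, ∀ X' ∈ C, X ≠ X' → 2 * t + 1 ≤ (X - X').rank)
    (A : Matrix (Fin N) (Fin n) F) (hA : A.rank = n)
    {X X' : Matrix (Fin n) (Fin m) F} (hX : X ∈ C) (hX' : X' ∈ C) (hne : X ≠ X')
    (D D' : Matrix (Fin N) (Fin t) F) (Z Z' : Matrix (Fin t) (Fin m) F) :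
    A * X + D * Z ≠ A * X' + D' * Z' := by
  intro heq
  have hkey : A * (X - X') = Matrix.fromCols D' (-D) * Matrix.fromRows Z' Z := by
    rw [Matrix.fromCols_mul_fromRows, Matrix.mul_sub]
    have h : A * X - A * X' = D' * Z' - D * Z := by
      rw [sub_eq_sub_iff_add_eq_add]
      linear_combination (norm := abel) heq
    rw [h, Matrix.neg_mul, sub_eq_add_neg]
  have h1 : (A * (X - X')).rank ≤ 2 * t := by
    rw [hkey]
    calc (Matrix.fromCols D' (-D) * Matrix.fromRows Z' Z).rank
        ≤ (Matrix.fromCols D' (-D)).rank := Matrix.rank_mul_le_left _ _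
      _ ≤ Fintype.card (Fin t ⊕ Fin t) := Matrix.rank_le_card_width _
      _ = 2 * t := by simp; omega
  rw [rank_mul_eq_of_full_rank A hA] at h1
  have h2 := hdist X hX X' hX' hne
  omega
end

section
/- Conversely, if C ⊆ F_q^{n×m} has two distinct codewords X, X' with rank(X − X') ≤ 2t, then there exist a full-rank A ∈ F_q^{n×n}, and matrices D, D' ∈ F_q^{n×t}, Z, Z' ∈ F_q^{t×m} such that AX + DZ = AX' + D'Z'; i.e., zero-error decoding under t errors for all feasible transfer matrices forces minimum rank distance at least 2t+1. -/
/-!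
A matrix of rank at most `2t = t + t` factors through `F^(Fin t ⊕ Fin t)`, so
`X - X' = D₁ Z₁ + D₂ Z₂` with inner dimension `t` in both products. Taking `A = 1`,
`X + (-D₂) Z₂ = X' + D₁ Z₁`.
-/

theorem Matrix.exists_eq_mul_of_rank_le {K m n ι : Type*} [Field K] [Fintype n] [Fintype ι]
    (M : Matrix m n K) (h : M.rank ≤ Fintype.card ι) :
    ∃ (B : Matrix m ι K) (C : Matrix ι n K), M = B * C := by
  classical
  set V := LinearMap.range M.mulVecLin
  obtain ⟨i, hi⟩ : ∃ i : V →ₗ[K] ι → K, Function.Injective i :=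
    finrank_le_iff_exists_linearMap.mp (by rwa [Module.finrank_fintype_fun_eq_card])
  obtain ⟨p, hp⟩ := i.exists_leftInverse_of_injective (LinearMap.ker_eq_bot.mpr hi)
  have hfactor : M.mulVecLin = (V.subtype ∘ₗ p) ∘ₗ (i ∘ₗ M.mulVecLin.rangeRestrict) :=
    LinearMap.ext fun v =>
      congrArg Subtype.val (LinearMap.congr_fun hp (M.mulVecLin.rangeRestrict v)).symm
  refine ⟨LinearMap.toMatrix' (V.subtype ∘ₗ p),
    LinearMap.toMatrix' (i ∘ₗ M.mulVecLin.rangeRestrict), ?_⟩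
  rw [← LinearMap.toMatrix'_comp, ← hfactor, ← Matrix.toLin'_apply',
    LinearMap.toMatrix'_toLin']

theorem Matrix.exists_eq_add_mul_of_rank_le_add {K m n : Type*} [Field K] [Fintype n] {a b : ℕ}
    (M : Matrix m n K) (h : M.rank ≤ a + b) :
    ∃ (D₁ : Matrix m (Fin a) K) (Z₁ : Matrix (Fin a) n K) (D₂ : Matrix m (Fin b) K)
      (Z₂ : Matrix (Fin b) n K), M = D₁ * Z₁ + D₂ * Z₂ := by
  obtain ⟨B, C, rfl⟩ := M.exists_eq_mul_of_rank_le (ι := Fin a ⊕ Fin b) (by simpa using h)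
  refine ⟨B.toCols₁, C.toRows₁, B.toCols₂, C.toRows₂, ?_⟩
  rw [← fromCols_mul_fromRows, fromCols_toCols, fromRows_toRows]

theorem confusable_codewords_of_small_rank_distance_general {F : Type*} [Field F]
    {n m t : ℕ}
    {X X' : Matrix (Fin n) (Fin m) F}
    (hrank : (X - X').rank ≤ 2 * t) :
    ∃ A : Matrix (Fin n) (Fin n) F, IsUnit A ∧
      ∃ (D D' : Matrix (Fin n) (Fin t) F) (Z Z' : Matrix (Fin t) (Fin m) F),
        A * X + D * Z = A * X' + D' * Z' := by
  obtain ⟨D₁, Z₁, D₂, Z₂, hsplit⟩ :=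
    (X - X').exists_eq_add_mul_of_rank_le_add (two_mul t ▸ hrank)
  refine ⟨1, isUnit_one, -D₂, D₁, Z₂, Z₁, ?_⟩
  rw [Matrix.one_mul, Matrix.one_mul, Matrix.neg_mul, eq_add_of_sub_eq' hsplit]
  abel

/-- Conversely, if `C` contains two distinct codewords at rank distance at most
`2t`, then there exist a full-rank (invertible) `A` and error matrices
`D, D', Z, Z'` such that `AX + DZ = AX' + D'Z'`: zero-error decoding under `t`
errors for all feasible transfer matrices forces minimum rank distance `≥ 2t+1`. -/
theorem confusable_codewords_of_small_rank_distance {F : Type*} [Field F] [Fintype F]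
    {n m t : ℕ} (ht : 1 ≤ t)
    (C : Set (Matrix (Fin n) (Fin m) F))
    {X X' : Matrix (Fin n) (Fin m) F} (hX : X ∈ C) (hX' : X' ∈ C) (hne : X ≠ X')
    (hrank : (X - X').rank ≤ 2 * t) :
    ∃ A : Matrix (Fin n) (Fin n) F, IsUnit A ∧
      ∃ (D D' : Matrix (Fin n) (Fin t) F) (Z Z' : Matrix (Fin t) (Fin m) F),
        A * X + D * Z = A * X' + D' * Z' :=
  confusable_codewords_of_small_rank_distance_general hrank
end

section
/- Let X ∈ F_q^{n×m} be a matrix-valued random variable uniformly distributed on a coset x₀ + C where C is the row space interpretation of an [n, n−k] linear MRD code over F_{q^m} with m ≥ n. Then for every full-rank B ∈ F_q^{μ×n} with μ ≤ n−k, the random variable W = BX is uniformly distributed on F_q^{μ×m}. -/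
open Module Finset Matrix

/-! If a codeword `c ≠ 0` of `C` satisfied `A c = 0` for a `K`-matrix `A` of rank `n - k`, the
`K`-linear map `a ↦ ∑ aⱼ cⱼ` on `K^n` would vanish on the row space of `A`, so its image, the
`K`-span of the entries of `c`, would have dimension `≤ k`, contradicting the rank distance.
Hence `c ↦ A c` is injective on `C`, and by dimension count surjective onto `L^(n-k)`.
Extending the rows of `B` to such an `A` shows that `c ↦ B c` maps `C` onto `L^μ`; translating
by codewords then gives all fibres of `x ↦ B x` on the coset the same size. -/

lemma LinearIndependent.exists_extend_fin {K V : Type*} [Field K] [AddCommGroup V] [Module K V]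
    {j l : ℕ} {v : Fin j → V} (hv : LinearIndependent K v) (hjl : j ≤ l)
    (hl : l ≤ finrank K V) :
    ∃ w : Fin l → V, LinearIndependent K w ∧ w ∘ Fin.castLE hjl = v := by
  induction l, hjl using Nat.le_induction with
  | base => exact ⟨v, hv, rfl⟩
  | succ l hjl ih =>
    obtain ⟨w, hw, rfl⟩ := ih (Nat.le_of_succ_le hl)
    obtain ⟨x, hx⟩ := exists_linearIndependent_snoc_of_lt_finrank hw hl
    exact ⟨Fin.snoc w x, hx,
      funext fun i => Fin.snoc_castSucc (α := fun _ => V) x w (Fin.castLE hjl i)⟩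

lemma Matrix.map_algebraMap_mulVec {K L ι κ : Type*} [CommSemiring K] [CommSemiring L]
    [Algebra K L] [Fintype κ] (A : Matrix ι κ K) (c : κ → L) :
    A.map (algebraMap K L) *ᵥ c = fun i => Fintype.linearCombination K c (A i) := by
  ext i
  simp [Matrix.mulVec, dotProduct, Fintype.linearCombination_apply, Algebra.smul_def]

-- The rank of `c` viewed as a matrix over `K`, each entry expanded in a `K`-basis of `L`.
noncomputable def rankWeight (K : Type*) {L ι : Type*} [Field K] [AddCommGroup L] [Module K L]
    (c : ι → L) : ℕ :=
  finrank K (Submodule.span K (Set.range c))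

lemma rankWeight_add_finrank_le_of_le_ker {K L ι : Type*} [Field K] [AddCommGroup L] [Module K L]
    [Fintype ι] (c : ι → L) {W : Submodule K (ι → K)}
    (hW : W ≤ LinearMap.ker (Fintype.linearCombination K c)) :
    rankWeight K c + finrank K W ≤ Fintype.card ι := by
  rw [rankWeight, ← Fintype.range_linearCombination, ← finrank_fintype_fun_eq_card K,
    ← LinearMap.finrank_range_add_finrank_ker (Fintype.linearCombination K c)]
  exact Nat.add_le_add_left (Submodule.finrank_mono hW) _

namespace Matrix

variable {K L : Type*} [Field K] [Field L] [Algebra K L] {n k : ℕ} {C : Submodule L (Fin n → L)}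

lemma eq_zero_of_map_algebraMap_mulVec_eq_zero
    (hMRD : ∀ c ∈ C, c ≠ 0 → k + 1 ≤ rankWeight K c) {ι : Type*} [Fintype ι]
    {A : Matrix ι (Fin n) K} (hA : n - k ≤ A.rank) {c : Fin n → L} (hc : c ∈ C)
    (hAc : A.map (algebraMap K L) *ᵥ c = 0) : c = 0 := by
  by_contra hc_ne
  have hspan : Submodule.span K (Set.range A.row) ≤
      LinearMap.ker (Fintype.linearCombination K c) := by
    rw [Submodule.span_le]
    rintro _ ⟨i, rfl⟩
    exact congrFun ((map_algebraMap_mulVec A c).symm.trans hAc) i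
  have h := rankWeight_add_finrank_le_of_le_ker c hspan
  rw [← rank_eq_finrank_span_row, Fintype.card_fin] at h
  have := hMRD c hc hc_ne
  omega

lemma surjOn_map_algebraMap_mulVec (hMRD : ∀ c ∈ C, c ≠ 0 → k + 1 ≤ rankWeight K c)
    (hC : finrank L C = n - k) {A : Matrix (Fin (n - k)) (Fin n) K} (hA : A.rank = n - k) :
    Set.SurjOn (A.map (algebraMap K L) *ᵥ ·) C Set.univ := by
  set T := (A.map (algebraMap K L)).mulVecLin.domRestrict C
  have hT_inj : Function.Injective T := by
    rw [← LinearMap.ker_eq_bot, LinearMap.ker_eq_bot']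
    rintro ⟨c, hc⟩ hTc
    exact Subtype.ext (eq_zero_of_map_algebraMap_mulVec_eq_zero hMRD hA.ge hc hTc)
  have hT_surj := (LinearMap.injective_iff_surjective_of_finrank_eq_finrank
    (by rw [hC, finrank_fin_fun])).1 hT_inj
  intro z _
  obtain ⟨⟨c, hc⟩, rfl⟩ := hT_surj z
  exact ⟨c, hc, rfl⟩

theorem surjOn_map_algebraMap_mulVec_of_rank_eq
    (hMRD : ∀ c ∈ C, c ≠ 0 → k + 1 ≤ rankWeight K c) (hC : finrank L C = n - k) {μ : ℕ}
    {B : Matrix (Fin μ) (Fin n) K} (hB : B.rank = μ) (hμ : μ ≤ n - k) :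
    Set.SurjOn (B.map (algebraMap K L) *ᵥ ·) C Set.univ := by
  have hrows : LinearIndependent K B.row := linearIndependent_iff_card_eq_finrank_span.2 <| by
    rw [Fintype.card_fin, Set.finrank, ← rank_eq_finrank_span_row, hB]
  obtain ⟨w, hw, hwB⟩ := hrows.exists_extend_fin hμ (by rw [finrank_fin_fun]; omega)
  have hA : (of w).rank = n - k := by
    rw [LinearIndependent.rank_matrix (M := of w) hw, Fintype.card_fin]
  intro y _
  obtain ⟨c, hc, hAc⟩ :=
    surjOn_map_algebraMap_mulVec hMRD hC hA (Set.mem_univ (Function.extend (Fin.castLE hμ) y 0))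
  refine ⟨c, hc, funext fun i => ?_⟩
  have hBA : (B.map (algebraMap K L) *ᵥ c) i =
      ((of w).map (algebraMap K L) *ᵥ c) (Fin.castLE hμ i) := by
    simp only [map_algebraMap_mulVec]
    exact congrArg _ (congrFun hwB i).symm
  dsimp only at hAc ⊢
  rw [hBA, hAc, (Fin.castLE_injective hμ).extend_apply]

end Matrix

lemma PMF.map_uniformOfFinset_eq_uniformOfFintype {α β : Type*} [Fintype β] [Nonempty β]
    [DecidableEq β] (f : α → β) {S : Finset α} (hS : S.Nonempty)
    (hfib : ∀ y₁ y₂, #{x ∈ S | f x = y₁} = #{x ∈ S | f x = y₂}) :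
    (PMF.uniformOfFinset S hS).map f = PMF.uniformOfFintype β := by
  ext y
  have hS_card : #S = Fintype.card β * #{x ∈ S | f x = y} := by
    rw [card_eq_sum_card_fiberwise fun x _ => mem_univ (f x), sum_congr rfl fun y' _ => hfib y' y,
      sum_const, card_univ, smul_eq_mul]
  have hfib_ne_zero : #{x ∈ S | f x = y} ≠ 0 := by
    intro h
    rw [h, mul_zero, card_eq_zero] at hS_card
    exact hS.ne_empty hS_card
  rw [← PMF.toOuterMeasure_apply_singleton, PMF.toOuterMeasure_map_apply,
    PMF.toOuterMeasure_uniformOfFinset_apply, PMF.uniformOfFintype_apply]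
  simp only [Set.mem_preimage, Set.mem_singleton_iff]
  rw [hS_card, Nat.cast_mul, ENNReal.div_eq_inv_mul, ENNReal.mul_inv (by simp) (by simp), mul_assoc,
    ENNReal.inv_mul_cancel (by exact_mod_cast hfib_ne_zero) (by simp), mul_one]

lemma AddMonoidHom.card_filter_coset_eq {G H : Type*} [AddCommGroup G] [AddCommGroup H]
    [DecidableEq H] (f : G →+ H) {C : AddSubgroup G} (hf : Set.SurjOn f C Set.univ) {x₀ : G}
    {S : Finset G} (hS : ∀ x, x ∈ S ↔ x - x₀ ∈ C) (y₁ y₂ : H) :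
    #{x ∈ S | f x = y₁} = #{x ∈ S | f x = y₂} := by
  obtain ⟨c, hc, hfc⟩ := hf (Set.mem_univ (y₂ - y₁))
  refine card_nbij' (· + c) (· - c) (fun x hx => ?_) (fun x hx => ?_)
    (fun x _ => add_sub_cancel_right x c) (fun x _ => sub_add_cancel x c)
  · simp only [coe_filter, Set.mem_ofPred_eq, hS, map_add, hfc] at hx ⊢
    refine ⟨?_, ?_⟩
    · simpa [add_sub_right_comm] using C.add_mem hx.1 hc
    · rw [hx.2]; abel
  · simp only [coe_filter, Set.mem_ofPred_eq, hS, map_sub, hfc] at hx ⊢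
    refine ⟨?_, ?_⟩
    · simpa [sub_right_comm] using C.sub_mem hx.1 hc
    · rw [hx.2]; abel

open scoped Classical in
theorem coset_coding_uniform_output_general {K L : Type*} [Field K] [Field L]
    [Fintype L] [Algebra K L] {n k μ : ℕ}
    (C : Submodule L (Fin n → L)) (hCdim : Module.finrank L C = n - k)
    (hMRD : ∀ c ∈ C, c ≠ 0 →
      k + 1 ≤ Module.finrank K (Submodule.span K (Set.range c)))
    (x₀ : Fin n → L)
    (B : Matrix (Fin μ) (Fin n) K) (hB : B.rank = μ) (hμ : μ ≤ n - k)
    (S : Finset (Fin n → L)) (hS : ∀ x, x ∈ S ↔ x - x₀ ∈ C) (hSne : S.Nonempty) :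
    PMF.map (fun x => (B.map (algebraMap K L)).mulVec x)
        (PMF.uniformOfFinset S hSne)
      = PMF.uniformOfFintype (Fin μ → L) := by
  have hsurj := Matrix.surjOn_map_algebraMap_mulVec_of_rank_eq hMRD hCdim hB hμ
  exact PMF.map_uniformOfFinset_eq_uniformOfFintype _ hSne
    ((B.map (algebraMap K L)).mulVecLin.toAddMonoidHom.card_filter_coset_eq
      (C := C.toAddSubgroup) hsurj hS)

open scoped Classical in
theorem coset_coding_uniform_output {K L : Type*} [Field K] [Field L]
    [Fintype K] [Fintype L] [Algebra K L] {n m k μ : ℕ}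
    (hm : Module.finrank K L = m) (hn : n ≤ m) (hkn : k ≤ n)
    (C : Submodule L (Fin n → L)) (hCdim : Module.finrank L C = n - k)
    (hMRD : ∀ c ∈ C, c ≠ 0 →
      k + 1 ≤ Module.finrank K (Submodule.span K (Set.range c)))
    (x₀ : Fin n → L)
    (B : Matrix (Fin μ) (Fin n) K) (hB : B.rank = μ) (hμ : μ ≤ n - k)
    (S : Finset (Fin n → L)) (hS : ∀ x, x ∈ S ↔ x - x₀ ∈ C) (hSne : S.Nonempty) :
    PMF.map (fun x => (B.map (algebraMap K L)).mulVec x)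
        (PMF.uniformOfFinset S hSne)
      = PMF.uniformOfFintype (Fin μ → L) :=
  coset_coding_uniform_output_general C hCdim hMRD x₀ B hB hμ S hS hSne
end

section
/- Let C ⊆ F_{q^m}^n be an [n, n−k] linear code over F_{q^m} with m ≥ n whose nonzero codewords, viewed as n×m matrices over F_q, all have rank at least k+1. Then for every full-rank B ∈ F_q^{μ×n} with μ ≤ n−k, the F_{q^m}-linear map c ↦ Bc restricted to C is surjective onto F_{q^m}^μ, where B acts on the matrix expansion of c. -/
open Module

lemma aux_right_inverse {K : Type*} [Field K] {a b : ℕ}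
    (A : Matrix (Fin a) (Fin b) K) (h : Function.Surjective A.mulVecLin) :
    ∃ R : Matrix (Fin b) (Fin a) K, A * R = 1 := by
  obtain ⟨g, hg⟩ := A.mulVecLin.exists_rightInverse_of_surjective
    (LinearMap.range_eq_top.mpr h)
  refine ⟨LinearMap.toMatrix' g, ?_⟩
  apply Matrix.toLin'.injective
  rw [Matrix.toLin'_mul, Matrix.toLin'_toMatrix', Matrix.toLin'_one, Matrix.toLin'_apply', hg]

lemma aux_left_inverse {K : Type*} [Field K] {a b : ℕ}
    (A : Matrix (Fin a) (Fin b) K) (h : LinearMap.ker A.mulVecLin = ⊥) :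
    ∃ Q : Matrix (Fin b) (Fin a) K, Q * A = 1 := by
  obtain ⟨g, hg⟩ := A.mulVecLin.exists_leftInverse_of_injective h
  refine ⟨LinearMap.toMatrix' g, ?_⟩
  apply Matrix.toLin'.injective
  rw [Matrix.toLin'_mul, Matrix.toLin'_toMatrix', Matrix.toLin'_one, Matrix.toLin'_apply', hg]

/-- If every nonzero codeword of the `[n, n-k]` linear code `C` over `F_{q^m}`
(`m ≥ n`) has rank at least `k + 1`, then for every full-rank `B ∈ F_q^{μ×n}`
with `μ ≤ n - k`, the map `c ↦ B c` restricted to `C` is surjective. -/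
theorem MRD_code_surjective_projection {K L : Type*} [Field K] [Field L]
    [Fintype K] [Fintype L] [Algebra K L] {n m k μ : ℕ}
    (hm : Module.finrank K L = m) (hn : n ≤ m) (hkn : k ≤ n)
    (C : Submodule L (Fin n → L)) (hCdim : Module.finrank L C = n - k)
    (hMRD : ∀ c ∈ C, c ≠ 0 →
      k + 1 ≤ Module.finrank K (Submodule.span K (Set.range c)))
    (B : Matrix (Fin μ) (Fin n) K) (hB : B.rank = μ) (hμ : μ ≤ n - k) :
    Function.Surjective
      (fun c : C => (B.map (algebraMap K L)).mulVec (c : Fin n → L)) := by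
  classical
  set f := algebraMap K L with hf
  have hFD : FiniteDimensional K L := Module.Finite.of_finite
  set B' := B.map f with hB'
  -- B has full row rank: mulVecLin surjective over K
  have hBtop : LinearMap.range B.mulVecLin = ⊤ := by
    apply Submodule.eq_top_of_finrank_eq
    rw [Module.finrank_fin_fun]
    exact hB
  -- right inverse over K, transported to L
  obtain ⟨R, hR⟩ := aux_right_inverse B (by rwa [← LinearMap.range_eq_top])
  have hB'surj : Function.Surjective B'.mulVecLin := by
    intro y
    refine ⟨(R.map f).mulVec y, ?_⟩
    rw [Matrix.mulVecLin_apply, Matrix.mulVec_mulVec, ← Matrix.map_mul, hR,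
      Matrix.map_one f (map_zero f) (map_one f), Matrix.one_mulVec]
  -- kernel of B' over L has dimension n - μ
  have hkerB' : finrank L (LinearMap.ker B'.mulVecLin) = n - μ := by
    have h1 := LinearMap.finrank_range_add_finrank_ker B'.mulVecLin
    rw [LinearMap.range_eq_top.mpr hB'surj, finrank_top, Module.finrank_fin_fun,
      Module.finrank_fin_fun] at h1
    omega
  -- kernel of B over K has dimension n - μ
  have hkerB : finrank K (LinearMap.ker B.mulVecLin) = n - μ := by
    have h1 := LinearMap.finrank_range_add_finrank_ker B.mulVecLin
    rw [Module.finrank_fin_fun] at h1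
    unfold Matrix.rank at hB
    omega
  have hkμ : k ≤ n - μ := by omega
  -- a K-linearly independent family of k vectors in the K-kernel of B
  set N := LinearMap.ker B.mulVecLin with hN
  let bN : Basis (Fin (n - μ)) K N := Module.finBasisOfFinrankEq K N hkerB
  set w : Fin k → (Fin n → K) := fun j => (bN (Fin.castLE hkμ j) : Fin n → K) with hw
  have hwker : ∀ j, B.mulVec (w j) = 0 := fun j => (bN (Fin.castLE hkμ j)).2
  have hwli : LinearIndependent K w := by
    have := (bN.linearIndependent.map' N.subtype N.ker_subtype)
    exact this.comp (Fin.castLE hkμ) (Fin.castLE_injective hkμ)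
  -- matrix whose columns are the w j
  set M : Matrix (Fin n) (Fin k) K := Matrix.of (fun i j => w j i) with hM
  have hMmul : ∀ (x : Fin k → L),
      (M.map f).mulVec x = ∑ j, x j • (f ∘ w j) := by
    intro x
    funext i
    simp only [Matrix.mulVec, dotProduct, Matrix.map_apply, hM, Matrix.of_apply,
      Finset.sum_apply, Pi.smul_apply, Function.comp_apply, smul_eq_mul]
    exact Finset.sum_congr rfl fun j _ => mul_comm _ _
  have hMker : LinearMap.ker M.mulVecLin = ⊥ := by
    rw [Matrix.ker_mulVecLin_eq_bot_iff]
    intro v hv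
    have h2 : ∑ j, v j • w j = 0 := by
      rw [← hv]
      funext i
      simp only [Matrix.mulVec, dotProduct, hM, Matrix.of_apply, Finset.sum_apply,
        Pi.smul_apply, smul_eq_mul]
      exact Finset.sum_congr rfl fun j _ => mul_comm _ _
    exact funext (Fintype.linearIndependent_iff.mp hwli v h2)
  obtain ⟨Q, hQ⟩ := aux_left_inverse M hMker
  -- the family f ∘ w is L-linearly independent
  have hfwli : LinearIndependent L (fun j => f ∘ w j) := by
    rw [Fintype.linearIndependent_iff]
    intro g hg
    have h0 : (M.map f).mulVec g = 0 := by rw [hMmul g]; exact hg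
    have : ((Q.map f) * (M.map f)).mulVec g = 0 := by
      rw [← Matrix.mulVec_mulVec, h0, Matrix.mulVec_zero]
    rw [← Matrix.map_mul, hQ, Matrix.map_one f (map_zero f) (map_one f),
      Matrix.one_mulVec] at this
    intro j
    exact congrFun this j
  set S : Submodule L (Fin n → L) := Submodule.span L (Set.range fun j => f ∘ w j) with hS
  have hSdim : finrank L S = k := by
    rw [hS, finrank_span_eq_card hfwli, Fintype.card_fin]
  -- S is contained in the kernel of B'
  have hSker : S ≤ LinearMap.ker B'.mulVecLin := by
    rw [hS, Submodule.span_le]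
    rintro _ ⟨j, rfl⟩
    simp only [SetLike.mem_coe, LinearMap.mem_ker, Matrix.mulVecLin_apply]
    funext i
    rw [← RingHom.map_mulVec f B (w j) i, hwker j]
    simp
  -- S meets C trivially, by the MRD property
  have hSC : S ⊓ C = ⊥ := by
    rw [Submodule.eq_bot_iff]
    rintro x ⟨hxS, hxC⟩
    by_contra hx0
    obtain ⟨g, hg⟩ := (Submodule.mem_span_range_iff_exists_fun L).mp hxS
    -- range of x lies in the K-span of the coefficients g
    have hrange : Submodule.span K (Set.range x) ≤ Submodule.span K (Set.range g) := by
      rw [Submodule.span_le]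
      rintro _ ⟨i, rfl⟩
      have hxi : x i = ∑ j, (w j i) • g j := by
        rw [← hg]
        simp only [Finset.sum_apply, Pi.smul_apply, Function.comp_apply, smul_eq_mul,
          Algebra.smul_def]
        exact Finset.sum_congr rfl fun j _ => mul_comm _ _
      rw [hxi]
      exact Submodule.sum_mem _ fun j _ =>
        Submodule.smul_mem _ _ (Submodule.subset_span ⟨j, rfl⟩)
    have hle : finrank K (Submodule.span K (Set.range x)) ≤ k := by
      calc finrank K (Submodule.span K (Set.range x))
          ≤ finrank K (Submodule.span K (Set.range g)) := Submodule.finrank_mono hrange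
        _ ≤ _ := by
            have := finrank_span_le_card (R := K) (Set.range g)
            refine le_trans this ?_
            rw [Set.toFinset_range]
            exact le_trans (Finset.card_image_le) (by simp)
    have := hMRD x hxC hx0
    omega
  -- the restricted map
  -- dimension bound on the kernel of the restricted map
  have hdisj : S ⊓ (LinearMap.ker B'.mulVecLin ⊓ C) = ⊥ := by
    rw [eq_bot_iff, ← hSC]
    exact le_inf inf_le_left (inf_le_right.trans inf_le_right)
  have hsum : finrank L S + finrank L ((LinearMap.ker B'.mulVecLin ⊓ C) : Submodule L (Fin n → L)) ≤ n - μ := by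
    rw [← Submodule.finrank_sup_add_finrank_inf_eq, hdisj, finrank_bot, add_zero]
    calc finrank L ((S ⊔ (LinearMap.ker B'.mulVecLin ⊓ C)) : Submodule L (Fin n → L))
        ≤ finrank L (LinearMap.ker B'.mulVecLin) :=
          Submodule.finrank_mono (sup_le hSker inf_le_left)
      _ = n - μ := hkerB'
  set ψ : C →ₗ[L] (Fin μ → L) := B'.mulVecLin.comp C.subtype with hψ
  have hkerψ : finrank L (LinearMap.ker ψ) ≤ n - μ - k := by
    have hmap : (LinearMap.ker ψ).map C.subtype ≤ (LinearMap.ker B'.mulVecLin) ⊓ C := by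
      rintro _ ⟨⟨c, hc⟩, hker, rfl⟩
      exact ⟨hker, hc⟩
    have heq : finrank L (LinearMap.ker ψ) = finrank L ((LinearMap.ker ψ).map C.subtype) :=
      (Submodule.equivMapOfInjective C.subtype (Submodule.injective_subtype C) _).finrank_eq
    rw [heq]
    have := Submodule.finrank_mono hmap
    omega
  -- conclude surjectivity by rank-nullity
  have hrn := LinearMap.finrank_range_add_finrank_ker ψ
  rw [hCdim] at hrn
  have hrangele : finrank L (LinearMap.range ψ) ≤ μ := by
    have := Submodule.finrank_le (LinearMap.range ψ)
    rwa [Module.finrank_fin_fun] at this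
  have hrtop : LinearMap.range ψ = ⊤ := by
    apply Submodule.eq_top_of_finrank_eq
    rw [Module.finrank_fin_fun]
    omega
  have hsurj : Function.Surjective ψ := LinearMap.range_eq_top.mp hrtop
  intro y
  obtain ⟨c', hc'⟩ := hsurj y
  exact ⟨c', hc'⟩
end

section
/- Rate converse: suppose S and X are random variables with X ∈ F_q^{n×m}, H(S|AX, BX) = 0 and I(S; BX) = 0 for some full-rank A ∈ F_q^{n'×n} and full-rank B = PA with P ∈ F_q^{μ×n'}. Then H(S) ≤ H(AX | BX) ≤ (n' − μ)·m·log q. -/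
/-- Distribution of a random variable `f` under the probability mass function `p`. -/
noncomputable def distOf {Ω α : Type*} [Fintype Ω] [DecidableEq α]
    (p : Ω → ℝ) (f : Ω → α) (x : α) : ℝ :=
  ∑ ω, if f ω = x then p ω else 0

/-- Shannon entropy (in nats) of the random variable `f` under `p`. -/
noncomputable def entropyOf {Ω α : Type*} [Fintype Ω] [Fintype α] [DecidableEq α]
    (p : Ω → ℝ) (f : Ω → α) : ℝ :=
  ∑ x, Real.negMulLog (distOf p f x)

/-- Conditional entropy `H(f | g) = H(f, g) - H(g)`. -/
noncomputable def condEntropyOf {Ω α β : Type*} [Fintype Ω] [Fintype α] [Fintype β]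
    [DecidableEq α] [DecidableEq β] (p : Ω → ℝ) (f : Ω → α) (g : Ω → β) : ℝ :=
  entropyOf p (fun ω => (f ω, g ω)) - entropyOf p g

/-- Mutual information `I(f; g) = H(f) + H(g) - H(f, g)`. -/
noncomputable def mutualInfoOf {Ω α β : Type*} [Fintype Ω] [Fintype α] [Fintype β]
    [DecidableEq α] [DecidableEq β] (p : Ω → ℝ) (f : Ω → α) (g : Ω → β) : ℝ :=
  entropyOf p f + entropyOf p g - entropyOf p (fun ω => (f ω, g ω))



open Finset Real
lemma distOf_nonneg {Ω α : Type*} [Fintype Ω] [DecidableEq α]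
    (p : Ω → ℝ) (hp0 : ∀ ω, 0 ≤ p ω) (f : Ω → α) (x : α) : 0 ≤ distOf p f x :=
  Finset.sum_nonneg fun ω _ => by split <;> simp [hp0 ω]

lemma sum_distOf {Ω α : Type*} [Fintype Ω] [Fintype α] [DecidableEq α]
    (p : Ω → ℝ) (f : Ω → α) : ∑ x, distOf p f x = ∑ ω, p ω := by
  unfold distOf
  rw [Finset.sum_comm]
  simp

lemma entropyOf_comp_inj {Ω α γ : Type*} [Fintype Ω] [Fintype α] [Fintype γ]
    [DecidableEq α] [DecidableEq γ] (p : Ω → ℝ) (f : Ω → α) (e : α → γ)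
    (he : Function.Injective e) :
    entropyOf p (fun ω => e (f ω)) = entropyOf p f := by
  unfold entropyOf
  have h1 : ∑ x : γ, Real.negMulLog (distOf p (fun ω => e (f ω)) x)
      = ∑ x ∈ Finset.univ.image e, Real.negMulLog (distOf p (fun ω => e (f ω)) x) := by
    refine (Finset.sum_subset (Finset.subset_univ _) ?_).symm
    intro y _ hy
    have : distOf p (fun ω => e (f ω)) y = 0 := by
      unfold distOf
      refine Finset.sum_eq_zero fun ω _ => ?_
      rw [if_neg]
      intro h
      exact hy (Finset.mem_image.2 ⟨f ω, Finset.mem_univ _, h⟩)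
    rw [this, Real.negMulLog_zero]
  rw [h1, Finset.sum_image (fun a _ b _ h => he h)]
  refine Finset.sum_congr rfl fun a _ => ?_
  congr 1
  unfold distOf
  refine Finset.sum_congr rfl fun ω _ => ?_
  simp [he.eq_iff]

lemma negMulLog_sum_le {ι : Type*} (t : Finset ι) (a : ι → ℝ) (h0 : ∀ i ∈ t, 0 ≤ a i) :
    Real.negMulLog (∑ i ∈ t, a i) ≤ ∑ i ∈ t, Real.negMulLog (a i) := by
  set s := ∑ i ∈ t, a i with hs
  have hs0 : 0 ≤ s := Finset.sum_nonneg h0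
  have : Real.negMulLog s = ∑ i ∈ t, -(a i * Real.log s) := by
    simp only [Real.negMulLog, neg_mul, Finset.sum_neg_distrib, ← Finset.sum_mul, hs]
  rw [this]
  refine Finset.sum_le_sum fun i hi => ?_
  rcases eq_or_lt_of_le (h0 i hi) with h | h
  · simp [Real.negMulLog, ← h]
  · have hle : a i ≤ s := Finset.single_le_sum h0 hi
    have : Real.log (a i) ≤ Real.log s := Real.log_le_log h hle
    have := mul_le_mul_of_nonneg_left this (le_of_lt h)
    simp only [Real.negMulLog]
    linarith

lemma distOf_fst {Ω α β : Type*} [Fintype Ω] [Fintype α] [Fintype β] [DecidableEq α]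
    [DecidableEq β] (p : Ω → ℝ) (f : Ω → α) (g : Ω → β) (b : β) :
    distOf p g b = ∑ a : α, distOf p (fun ω => (f ω, g ω)) (a, b) := by
  unfold distOf
  rw [Finset.sum_comm]
  refine Finset.sum_congr rfl fun ω _ => ?_
  simp [Prod.ext_iff, ite_and]

lemma entropyOf_le_pair {Ω α β : Type*} [Fintype Ω] [Fintype α] [Fintype β] [DecidableEq α]
    [DecidableEq β] (p : Ω → ℝ) (hp0 : ∀ ω, 0 ≤ p ω) (f : Ω → α) (g : Ω → β) :
    entropyOf p g ≤ entropyOf p (fun ω => (f ω, g ω)) := by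
  unfold entropyOf
  rw [Fintype.sum_prod_type_right]
  refine Finset.sum_le_sum fun b _ => ?_
  rw [distOf_fst p f g b]
  exact negMulLog_sum_le _ _ fun a _ => distOf_nonneg p hp0 _ _

lemma sum_negMulLog_le {ι : Type*} (t : Finset ι) (a : ι → ℝ) (h0 : ∀ i ∈ t, 0 ≤ a i) :
    ∑ i ∈ t, Real.negMulLog (a i)
      ≤ Real.negMulLog (∑ i ∈ t, a i) + (∑ i ∈ t, a i) * Real.log t.card := by
  set s := ∑ i ∈ t, a i with hs
  have hs0 : 0 ≤ s := Finset.sum_nonneg h0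
  rcases eq_or_lt_of_le hs0 with h | h
  · have hz : ∀ i ∈ t, a i = 0 := by
      intro i hi
      exact (Finset.sum_eq_zero_iff_of_nonneg h0).1 h.symm i hi
    rw [← h]
    rw [Finset.sum_congr rfl fun i hi => by rw [hz i hi]]
    simp
  · have htne : t.Nonempty := by
      by_contra hne
      rw [Finset.not_nonempty_iff_eq_empty] at hne
      rw [hs, hne] at h; simp at h
    have hc0 : (0 : ℝ) < t.card := by exact_mod_cast Finset.card_pos.2 htne
    have key : ∀ i ∈ t, Real.negMulLog (a i)
        ≤ -(a i * Real.log s) + a i * Real.log t.card + (s / t.card - a i) := by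
      intro i hi
      rcases eq_or_lt_of_le (h0 i hi) with hai | hai
      · rw [← hai]
        simp [Real.negMulLog]
        positivity
      · have hx : (0:ℝ) < s / (a i * t.card) := by positivity
        have hlog := Real.log_le_sub_one_of_pos hx
        rw [Real.log_div (ne_of_gt h) (by positivity), Real.log_mul (ne_of_gt hai) (ne_of_gt hc0)]
          at hlog
        have := mul_le_mul_of_nonneg_left hlog (le_of_lt hai)
        have hdiv : a i * (s / (a i * t.card) - 1) = s / t.card - a i := by
          field_simp
        rw [hdiv] at this
        simp only [Real.negMulLog]
        nlinarith
    calc ∑ i ∈ t, Real.negMulLog (a i)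
        ≤ ∑ i ∈ t, (-(a i * Real.log s) + a i * Real.log t.card + (s / t.card - a i)) :=
          Finset.sum_le_sum key
      _ = Real.negMulLog s + s * Real.log t.card := by
          rw [Finset.sum_add_distrib, Finset.sum_add_distrib, Finset.sum_sub_distrib,
            Finset.sum_neg_distrib, ← Finset.sum_mul, ← Finset.sum_mul, ← hs,
            Finset.sum_const, Real.negMulLog]
          have : (t.card : ℝ) * (s / t.card) = s := by field_simp
          rw [nsmul_eq_mul, this]
          ring

lemma distOf_comp {Ω α β : Type*} [Fintype Ω] [Fintype α] [DecidableEq α] [DecidableEq β]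
    (p : Ω → ℝ) (f : Ω → α) (φ : α → β) (b : β) :
    distOf p (fun ω => φ (f ω)) b
      = ∑ a ∈ Finset.univ.filter (fun a => φ a = b), distOf p f a := by
  unfold distOf
  rw [Finset.sum_comm]
  refine Finset.sum_congr rfl fun ω _ => ?_
  rw [Finset.sum_filter]
  have hx : ∀ x : α, (if φ x = b then if f ω = x then p ω else 0 else 0)
      = (if x = f ω then (if φ (f ω) = b then p ω else 0) else 0) := by
    intro x
    by_cases h : x = f ω <;> simp [h, eq_comm (a := f ω)]
  simp only [hx, Finset.sum_ite_eq', Finset.mem_univ, if_true]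

lemma entropy_sub_entropy_comp_le {Ω α β : Type*} [Fintype Ω] [Fintype α] [Fintype β]
    [DecidableEq α] [DecidableEq β] (p : Ω → ℝ) (hp0 : ∀ ω, 0 ≤ p ω) (hp1 : ∑ ω, p ω = 1)
    (f : Ω → α) (φ : α → β) (N : ℕ) (hN : 1 ≤ N)
    (hfib : ∀ b, (Finset.univ.filter (fun a => φ a = b)).card ≤ N) :
    entropyOf p f - entropyOf p (fun ω => φ (f ω)) ≤ Real.log N := by
  have hlogN : (0:ℝ) ≤ Real.log N := Real.log_nonneg (by exact_mod_cast hN)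
  have hlogcard : ∀ b : β, Real.log ((Finset.univ.filter (fun a => φ a = b)).card : ℝ)
      ≤ Real.log N := by
    intro b
    rcases Nat.eq_zero_or_pos (Finset.univ.filter (fun a => φ a = b)).card with h | h
    · rw [h]; simpa using hlogN
    · exact Real.log_le_log (by exact_mod_cast h) (by exact_mod_cast hfib b)
  have h1 : entropyOf p f
      = ∑ b : β, ∑ a ∈ Finset.univ.filter (fun a => φ a = b), Real.negMulLog (distOf p f a) := by
    rw [Finset.sum_fiberwise]
    rfl
  have h2 : entropyOf p f ≤ ∑ b : β, (Real.negMulLog (distOf p (fun ω => φ (f ω)) b)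
      + distOf p (fun ω => φ (f ω)) b * Real.log N) := by
    rw [h1]
    refine Finset.sum_le_sum fun b _ => ?_
    have := sum_negMulLog_le (Finset.univ.filter (fun a => φ a = b)) (distOf p f)
      (fun a _ => distOf_nonneg p hp0 f a)
    rw [← distOf_comp p f φ b] at this
    refine this.trans ?_
    have := mul_le_mul_of_nonneg_left (hlogcard b)
      (distOf_nonneg p hp0 (fun ω => φ (f ω)) b)
    linarith
  have h3 : ∑ b : β, (Real.negMulLog (distOf p (fun ω => φ (f ω)) b)
      + distOf p (fun ω => φ (f ω)) b * Real.log N)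
      = entropyOf p (fun ω => φ (f ω)) + Real.log N := by
    rw [Finset.sum_add_distrib, ← Finset.sum_mul, sum_distOf, hp1, one_mul]
    rfl
  rw [h3] at h2
  linarith

lemma card_fiber_le {F : Type*} [Field F] [Fintype F] [DecidableEq F] {n' μ m : ℕ}
    (P : Matrix (Fin μ) (Fin n') F) (hP : P.rank = μ)
    (w : Matrix (Fin μ) (Fin m) F) :
    (Finset.univ.filter (fun y : Matrix (Fin n') (Fin m) F => P * y = w)).card
      ≤ Fintype.card F ^ ((n' - μ) * m) := by
  classical
  -- kernel of mulVec has cardinality q^(n'-μ)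
  have hfr : Module.finrank F (LinearMap.ker P.mulVecLin) = n' - μ := by
    have h1 := LinearMap.finrank_range_add_finrank_ker P.mulVecLin
    have h2 : Module.finrank F (Fin n' → F) = n' := by simp
    have h3 : Module.finrank F (LinearMap.range P.mulVecLin) = μ := hP
    omega
  have hkerv : Fintype.card {v : Fin n' → F // P.mulVec v = 0}
      = Fintype.card F ^ (n' - μ) := by
    have he : {v : Fin n' → F // P.mulVec v = 0} ≃ LinearMap.ker P.mulVecLin :=
      Equiv.subtypeEquivRight (by intro v; simp [LinearMap.mem_ker])
    rw [Fintype.card_congr he, Module.card_eq_pow_finrank (K := F), hfr]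
  -- kernel of matrix multiplication
  have hmatker : Fintype.card {y : Matrix (Fin n') (Fin m) F // P * y = 0}
      = Fintype.card F ^ ((n' - μ) * m) := by
    have hcol : ∀ (y : Matrix (Fin n') (Fin m) F) (j : Fin m),
        (fun i => (P * y) i j) = P.mulVec (fun k => y k j) := by
      intro y j
      funext i
      simp [Matrix.mul_apply, Matrix.mulVec, dotProduct]
    have he : {y : Matrix (Fin n') (Fin m) F // P * y = 0}
        ≃ (Fin m → {v : Fin n' → F // P.mulVec v = 0}) :=
      { toFun := fun y j => ⟨fun k => y.1 k j, by
          rw [← hcol y.1 j, y.2]; rfl⟩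
        invFun := fun g => ⟨Matrix.of (fun k j => (g j).1 k), by
          ext i j
          have := congrFun ((hcol (Matrix.of (fun k j => (g j).1 k)) j).trans
            (by rw [show (fun k => (Matrix.of fun k j => (g j).1 k) k j) = (g j).1 from rfl,
              (g j).2])) i
          simpa using this⟩
        left_inv := fun y => rfl
        right_inv := fun g => rfl }
    rw [Fintype.card_congr he, Fintype.card_fun, hkerv, Fintype.card_fin, ← pow_mul]
  -- fiber injects into kernel
  rcases Finset.eq_empty_or_nonempty
    (Finset.univ.filter (fun y : Matrix (Fin n') (Fin m) F => P * y = w)) with h | h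
  · simp [h]
  · obtain ⟨y0, hy0⟩ := h
    rw [Finset.mem_filter] at hy0
    have hinj : ∀ y ∈ Finset.univ.filter (fun y : Matrix (Fin n') (Fin m) F => P * y = w),
        y - y0 ∈ Finset.univ.filter (fun y : Matrix (Fin n') (Fin m) F => P * y = 0) := by
      intro y hy
      rw [Finset.mem_filter] at hy ⊢
      refine ⟨Finset.mem_univ _, ?_⟩
      rw [Matrix.mul_sub, hy.2, hy0.2, sub_self]
    have hle := Finset.card_le_card_of_injOn (fun y => y - y0) hinj
      (fun a _ b _ hab => by simpa using sub_left_injective hab)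
    rw [show (Finset.univ.filter (fun y : Matrix (Fin n') (Fin m) F => P * y = 0)).card
      = Fintype.card {y : Matrix (Fin n') (Fin m) F // P * y = 0} from
      (Fintype.card_subtype _).symm] at hle
    exact hle.trans_eq hmatker

/-- Rate converse: if the message `S` is determined by `(AX, BX)` and independent
of `BX` (zero leakage), where `A` has rank `n'` and `B = P * A` with `P` of rank
`μ`, then `H(S) ≤ H(AX | BX) ≤ (n' - μ) * m * log q`. -/
theorem rate_converse {F : Type*} [Field F] [Fintype F] [DecidableEq F]
    {Ω σ : Type*} [Fintype Ω] [Fintype σ] [DecidableEq σ]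
    {n n' μ m : ℕ}
    (p : Ω → ℝ) (hp0 : ∀ ω, 0 ≤ p ω) (hp1 : ∑ ω, p ω = 1)
    (S : Ω → σ) (X : Ω → Matrix (Fin n) (Fin m) F)
    (A : Matrix (Fin n') (Fin n) F) (hA : A.rank = n')
    (P : Matrix (Fin μ) (Fin n') F) (hP : P.rank = μ)
    (B : Matrix (Fin μ) (Fin n) F) (hB : B = P * A)
    (hdec : condEntropyOf p S (fun ω => (A * X ω, B * X ω)) = 0)
    (hsec : mutualInfoOf p S (fun ω => B * X ω) = 0) :
    entropyOf p S ≤ condEntropyOf p (fun ω => A * X ω) (fun ω => B * X ω) ∧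
    condEntropyOf p (fun ω => A * X ω) (fun ω => B * X ω)
      ≤ ((n' - μ : ℕ) * m : ℝ) * Real.log (Fintype.card F) := by
  classical
  set Y : Ω → Matrix (Fin n') (Fin m) F := fun ω => A * X ω with hY
  set W : Ω → Matrix (Fin μ) (Fin m) F := fun ω => B * X ω with hW
  constructor
  · -- H(S) ≤ H(Y | W)
    simp only [condEntropyOf, mutualInfoOf] at hdec hsec ⊢
    have e1 : entropyOf p (fun ω => (S ω, (Y ω, W ω)))
        = entropyOf p (fun ω => (Y ω, (S ω, W ω))) := by
      exact entropyOf_comp_inj p (fun ω => (Y ω, (S ω, W ω)))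
        (fun x => (x.2.1, (x.1, x.2.2)))
        (fun a b h => by
          obtain ⟨a1, a2, a3⟩ := a
          obtain ⟨b1, b2, b3⟩ := b
          simp only [Prod.mk.injEq] at h ⊢
          tauto)
    have e2 : entropyOf p (fun ω => (S ω, W ω))
        ≤ entropyOf p (fun ω => (Y ω, (S ω, W ω))) :=
      entropyOf_le_pair p hp0 Y (fun ω => (S ω, W ω))
    linarith
  · -- H(Y | W) ≤ (n' - μ) m log q
    have hWY : W = fun ω => P * Y ω := by
      funext ω
      show B * X ω = P * (A * X ω)
      rw [hB, Matrix.mul_assoc]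
    rw [hWY]
    simp only [condEntropyOf]
    have hpair : entropyOf p (fun ω => (Y ω, P * Y ω)) = entropyOf p Y :=
      entropyOf_comp_inj p Y (fun y => (y, P * y))
        (fun a b h => congrArg Prod.fst h)
    rw [hpair]
    have hN : 1 ≤ Fintype.card F ^ ((n' - μ) * m) :=
      Nat.one_le_pow _ _ Fintype.card_pos
    have hbound := entropy_sub_entropy_comp_le p hp0 hp1 Y (fun y => P * y)
      (Fintype.card F ^ ((n' - μ) * m)) hN (fun b => card_fiber_le P hP b)
    refine hbound.trans ?_
    rw [Nat.cast_pow, Real.log_pow]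
    push_cast
    ring_nf
    exact le_refl _
end

section
/- Packet-length converse ingredient: if C ⊆ F_q^{n×m} satisfies |C| ≥ q^{mμ} and every two distinct elements X, Y ∈ C satisfy rank(X − Y) ≥ n − μ + 1, where 0 < μ < n, then m ≥ n. -/
/-!
Rank-metric Singleton bound: if distinct codewords differ in rank by more than `d`, they already
differ on any fixed set of `m - d` columns, so `|C| ≤ q^{n(m-d)}`. For `m < n` and `d = n - μ`
this exponent is strictly smaller than `mμ`, contradicting `|C| ≥ q^{mμ}`.
-/

open Finset Matrix

theorem Matrix.rank_le_card_of_col_eq_zero {ι κ F : Type*} [Fintype ι] [Fintype κ] [Field F]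
    (A : Matrix ι κ F) (s : Finset κ) (h : ∀ i, ∀ j ∉ s, A i j = 0) : A.rank ≤ #s := by
  classical
  have hcols : Submodule.span F (Set.range Aᵀ) ≤ Submodule.span F (s.image Aᵀ : Set (ι → F)) := by
    refine Submodule.span_le.2 ?_
    rintro _ ⟨j, rfl⟩
    by_cases hj : j ∈ s
    · exact Submodule.subset_span (mem_coe.2 (mem_image_of_mem _ hj))
    · have : Aᵀ j = 0 := funext fun i => h i j hj
      simp [this]
  calc A.rank = Module.finrank F (Submodule.span F (Set.range Aᵀ)) := A.rank_eq_finrank_span_cols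
    _ ≤ (s.image Aᵀ : Set (ι → F)).finrank F := Submodule.finrank_mono hcols
    _ ≤ #(s.image Aᵀ) := finrank_span_finset_le_card _
    _ ≤ #s := card_image_le

theorem Matrix.card_le_of_lt_rank_sub {ι κ F : Type*} [Fintype ι] [Fintype κ] [Field F] [Fintype F]
    (C : Finset (Matrix ι κ F)) (d : ℕ)
    (hC : ∀ X ∈ C, ∀ Y ∈ C, X ≠ Y → d < (X - Y).rank) :
    #C ≤ Fintype.card F ^ (Fintype.card ι * (Fintype.card κ - d)) := by
  classical
  obtain ⟨K, -, hK⟩ := exists_subset_card_eq (s := (univ : Finset κ)) (n := Fintype.card κ - d)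
    (by simp)
  let restrict : Matrix ι κ F → ι → K → F := fun X i j => X i j
  have hinj : Set.InjOn restrict C := by
    intro X hX Y hY hXY
    by_contra hne
    have hvanish : ∀ i, ∀ j ∉ Kᶜ, (X - Y) i j = 0 := fun i j hj => by
      simpa [sub_eq_zero] using congrFun (congrFun hXY i) ⟨j, by simpa using hj⟩
    have hrank_le := (X - Y).rank_le_card_of_col_eq_zero Kᶜ hvanish
    rw [card_compl, hK] at hrank_le
    have hrank_gt := hC X hX Y hY hne
    omega
  calc #C ≤ Fintype.card (ι → K → F) := card_le_card_of_injOn restrict (fun _ _ => mem_univ _) hinj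
    _ = Fintype.card F ^ (Fintype.card ι * (Fintype.card κ - d)) := by
      simp [hK, ← pow_mul, mul_comm]

/-- Packet-length converse ingredient: if `C ⊆ F_q^{n×m}` has at least `q^{mμ}`
elements and minimum rank distance at least `n - μ + 1`, with `0 < μ < n` and
`0 < m`, then `m ≥ n`. -/
theorem packet_length_converse {F : Type*} [Field F] [Fintype F]
    {n m μ : ℕ} (hm : 0 < m) (hμ0 : 0 < μ) (hμn : μ < n)
    (C : Finset (Matrix (Fin n) (Fin m) F))
    (hcard : Fintype.card F ^ (m * μ) ≤ C.card)
    (hdist : ∀ X ∈ C, ∀ Y ∈ C, X ≠ Y → n - μ + 1 ≤ (X - Y).rank) :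
    n ≤ m := by
  by_contra! hmn
  have hsingleton : C.card ≤ Fintype.card F ^ (n * (m - (n - μ))) := by
    simpa using Matrix.card_le_of_lt_rank_sub C (n - μ) hdist
  -- with `s = n - μ < m`, the exponent gap `m μ - n (m - s)` equals `s (n - m)`
  have hexp : n * (m - (n - μ)) < m * μ := by
    rcases le_or_gt m (n - μ) with hs | hs
    · simpa [Nat.sub_eq_zero_of_le hs] using Nat.mul_pos hm hμ0
    · obtain ⟨s, hs_def⟩ : ∃ s, n = s + μ := ⟨n - μ, by omega⟩
      obtain ⟨k, hk⟩ : ∃ k, m = s + k := ⟨m - s, by omega⟩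
      subst hs_def hk
      have : 0 < s := by omega
      simp only [Nat.add_sub_cancel, Nat.add_sub_cancel_left]
      nlinarith
  exact absurd (hcard.trans hsingleton) (not_le.2 (Nat.pow_lt_pow_right Fintype.one_lt_card hexp))
end
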